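/- arXiv:2512.18348 — 11 statements merged into one kernel-verified Lean document; each statement's English description precedes it below -/
import Mathlib

section
/- Let f₁, …, f_m : ℝⁿ → ℝ be differentiable and let x ∈ ℝⁿ. If x is not Pareto critical for (f₁, …, f_m), then the steepest descent direction satisfies d_SD(x) ≠ 0 and the optimal value satisfies θ_SD(x) < 0. -/
open RealInnerProductSpace

noncomputable def maxInner {n m : ℕ} (hm : 0 < m) (g : Fin m → EuclideanSpace ℝ (Fin n))
    (d : EuclideanSpace ℝ (Fin n)) : ℝ :=
  Finset.univ.sup' ⟨⟨0, hm⟩, Finset.mem_univ _⟩ fun i => ⟪g i, d⟫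

def ParetoCritical {n m : ℕ} (f : Fin m → EuclideanSpace ℝ (Fin n) → ℝ)
    (x : EuclideanSpace ℝ (Fin n)) : Prop :=
  ∀ d : EuclideanSpace ℝ (Fin n), ∃ i : Fin m, 0 ≤ ⟪gradient (f i) x, d⟫

/-- if `x` is not Pareto critical then `d_SD(x) ≠ 0` and `θ_SD(x) < 0`. -/
theorem stmt_2 (n m : ℕ) (hm : 0 < m) (f : Fin m → EuclideanSpace ℝ (Fin n) → ℝ)
    (hf : ∀ i, Differentiable ℝ (f i)) (x : EuclideanSpace ℝ (Fin n))
    (dSD : EuclideanSpace ℝ (Fin n))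
    (hdSD : ∀ d : EuclideanSpace ℝ (Fin n),
      maxInner hm (fun i => gradient (f i) x) dSD + ‖dSD‖ ^ 2 / 2 ≤
        maxInner hm (fun i => gradient (f i) x) d + ‖d‖ ^ 2 / 2)
    (hx : ¬ ParetoCritical f x) :
    dSD ≠ 0 ∧ maxInner hm (fun i => gradient (f i) x) dSD + ‖dSD‖ ^ 2 / 2 < 0 := by
  simp only [ParetoCritical, not_forall, not_exists, not_le] at hx
  obtain ⟨d, hd⟩ := hx
  set g : Fin m → EuclideanSpace ℝ (Fin n) := fun i => gradient (f i) x with hg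
  have hdne : d ≠ 0 := by
    rintro rfl
    have := hd ⟨0, hm⟩
    simp at this
  have hdn : (0:ℝ) < ‖d‖ ^ 2 := by
    have := norm_pos_iff.2 hdne
    positivity
  set M := maxInner hm g d with hMdef
  have hM : M < 0 := by
    rw [hMdef, maxInner]
    exact (Finset.sup'_lt_iff _).2 fun i _ => hd i
  set t := -M / ‖d‖ ^ 2 with htdef
  have ht : 0 < t := div_pos (neg_pos.2 hM) hdn
  have hscale : maxInner hm g (t • d) = t * M := by
    rw [hMdef, maxInner, maxInner]
    erw [Finset.comp_sup'_eq_sup'_comp _ (fun r => t * r)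
      (fun a b => mul_max_of_nonneg a b ht.le)]
    congr 1
    funext i
    simp only [Function.comp_apply, real_inner_smul_right]
  have hval : maxInner hm g (t • d) + ‖t • d‖ ^ 2 / 2 < 0 := by
    rw [hscale, norm_smul]
    have h1 : (‖t • (0:ℝ)‖) = 0 := by simp
    have ht2 : t * ‖d‖ ^ 2 = -M := by
      rw [htdef]; field_simp
    have : (‖t‖ * ‖d‖) ^ 2 = t * (t * ‖d‖ ^ 2) := by
      rw [Real.norm_eq_abs, abs_of_pos ht]; ring
    rw [this, ht2]
    nlinarith
  have hθ : maxInner hm g dSD + ‖dSD‖ ^ 2 / 2 < 0 := lt_of_le_of_lt (hdSD (t • d)) hval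
  refine ⟨?_, hθ⟩
  rintro rfl
  rw [maxInner] at hθ
  simp at hθ
  erw [Finset.sup'_const] at hθ
  exact lt_irrefl _ hθ
end

section
/- Let f₁, …, f_m : ℝⁿ → ℝ be differentiable and let x ∈ ℝⁿ. Then the steepest descent direction satisfies max_{i∈[m]} ⟨∇f_i(x), d_SD(x)⟩ ≤ −½ ‖d_SD(x)‖². -/
open RealInnerProductSpace

/-- `max_i ⟪∇f_i(x), d_SD(x)⟫ ≤ −½‖d_SD(x)‖²`. -/
theorem stmt_3 (n m : ℕ) (hm : 0 < m) (f : Fin m → EuclideanSpace ℝ (Fin n) → ℝ)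
    (hf : ∀ i, Differentiable ℝ (f i)) (x : EuclideanSpace ℝ (Fin n))
    (dSD : EuclideanSpace ℝ (Fin n))
    (hdSD : ∀ d : EuclideanSpace ℝ (Fin n),
      maxInner hm (fun i => gradient (f i) x) dSD + ‖dSD‖ ^ 2 / 2 ≤
        maxInner hm (fun i => gradient (f i) x) d + ‖d‖ ^ 2 / 2) :
    maxInner hm (fun i => gradient (f i) x) dSD ≤ -(1 / 2) * ‖dSD‖ ^ 2 := by
  have h := hdSD 0
  have h0 : maxInner hm (fun i => gradient (f i) x) 0 = 0 := by
    simp [maxInner]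
    exact Finset.sup'_const _ _
  rw [h0] at h
  simp at h
  linarith
end

section
/- Let f₁, …, f_m : ℝⁿ → ℝ be continuously differentiable. Then the map x ↦ d_SD(x) is continuous on ℝⁿ. -/
open RealInnerProductSpace

section Aux

variable {n m : ℕ} (hm : 0 < m)

lemma le_maxInner (g : Fin m → EuclideanSpace ℝ (Fin n)) (d : EuclideanSpace ℝ (Fin n))
    (i : Fin m) : ⟪g i, d⟫ ≤ maxInner hm g d :=
  Finset.le_sup' (fun i => ⟪g i, d⟫) (Finset.mem_univ i)

lemma maxInner_le (g : Fin m → EuclideanSpace ℝ (Fin n)) (d : EuclideanSpace ℝ (Fin n))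
    {c : ℝ} (h : ∀ i, ⟪g i, d⟫ ≤ c) : maxInner hm g d ≤ c :=
  Finset.sup'_le _ _ fun i _ => h i

/-- Lipschitz-type bound in the `g` argument, with the sum of norms as modulus. -/
lemma maxInner_lip (g g' : Fin m → EuclideanSpace ℝ (Fin n)) (d : EuclideanSpace ℝ (Fin n)) :
    maxInner hm g d ≤ maxInner hm g' d + (∑ i, ‖g i - g' i‖) * ‖d‖ := by
  apply maxInner_le
  intro i
  have h1 : ⟪g i, d⟫ = ⟪g' i, d⟫ + ⟪g i - g' i, d⟫ := by
    rw [inner_sub_left]; ring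
  have h2 : ⟪g i - g' i, d⟫ ≤ ‖g i - g' i‖ * ‖d‖ := real_inner_le_norm _ _
  have h3 : ‖g i - g' i‖ ≤ ∑ j, ‖g j - g' j‖ :=
    Finset.single_le_sum (f := fun j => ‖g j - g' j‖)
      (fun j _ => norm_nonneg _) (Finset.mem_univ i)
  have h4 : ‖g i - g' i‖ * ‖d‖ ≤ (∑ j, ‖g j - g' j‖) * ‖d‖ :=
    mul_le_mul_of_nonneg_right h3 (norm_nonneg d)
  have h5 := le_maxInner hm g' d i
  linarith

lemma maxInner_zero (g : Fin m → EuclideanSpace ℝ (Fin n)) :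
    maxInner hm g 0 = 0 := by
  unfold maxInner
  simp
  apply le_antisymm (Finset.sup'_le _ _ fun _ _ => le_rfl)
  exact Finset.le_sup' (f := fun _ : Fin m => (0:ℝ)) (Finset.mem_univ ⟨0, hm⟩)

end Aux

/-- if each `f_i` is continuously differentiable then `x ↦ d_SD(x)` is
continuous, where for every `x`, `d_SD(x)` minimizes `d ↦ max_i ⟪∇f_i(x), d⟫ + ‖d‖²/2`. -/
theorem stmt_4 (n m : ℕ) (hm : 0 < m) (f : Fin m → EuclideanSpace ℝ (Fin n) → ℝ)
    (hf : ∀ i, ContDiff ℝ 1 (f i))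
    (dSD : EuclideanSpace ℝ (Fin n) → EuclideanSpace ℝ (Fin n))
    (hdSD : ∀ x d : EuclideanSpace ℝ (Fin n),
      maxInner hm (fun i => gradient (f i) x) (dSD x) + ‖dSD x‖ ^ 2 / 2 ≤
        maxInner hm (fun i => gradient (f i) x) d + ‖d‖ ^ 2 / 2) :
    Continuous dSD := by
  -- continuity of the gradients
  have hgcont : ∀ i, Continuous fun x => gradient (f i) x := by
    intro i
    unfold gradient
    exact (InnerProductSpace.toDual ℝ _).symm.continuous.comp
      ((hf i).continuous_fderiv (by norm_num))
  -- strong convexity at the minimizer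
  have key : ∀ x d, ‖d - dSD x‖ ^ 2 / 4 ≤
      maxInner hm (fun i => gradient (f i) x) d + ‖d‖ ^ 2 / 2 -
        (maxInner hm (fun i => gradient (f i) x) (dSD x) + ‖dSD x‖ ^ 2 / 2) := by
    intro x d
    have h1 := hdSD x ((2:ℝ)⁻¹ • (d + dSD x))
    have h2 : maxInner hm (fun i => gradient (f i) x) ((2:ℝ)⁻¹ • (d + dSD x)) ≤
        (2:ℝ)⁻¹ * (maxInner hm (fun i => gradient (f i) x) d +
          maxInner hm (fun i => gradient (f i) x) (dSD x)) := by
      apply maxInner_le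
      intro i
      rw [real_inner_smul_right, inner_add_right]
      have := le_maxInner hm (fun i => gradient (f i) x) d i
      have := le_maxInner hm (fun i => gradient (f i) x) (dSD x) i
      linarith
    have h3 : ‖(2:ℝ)⁻¹ • (d + dSD x)‖ ^ 2 =
        (‖d‖ ^ 2 + ‖dSD x‖ ^ 2) / 2 - ‖d - dSD x‖ ^ 2 / 4 := by
      rw [norm_smul, Real.norm_eq_abs]
      have ha := norm_add_sq_real d (dSD x)
      have hb := norm_sub_sq_real d (dSD x)
      rw [abs_of_nonneg (by norm_num : (0:ℝ) ≤ (2:ℝ)⁻¹)]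
      nlinarith [ha, hb]
    nlinarith [h1, h2, h3]
  -- a-priori bound on the minimizer
  have bnd : ∀ x, ‖dSD x‖ ≤ 2 * ‖gradient (f ⟨0, hm⟩) x‖ := by
    intro x
    have h0 := hdSD x 0
    rw [maxInner_zero] at h0
    simp only [norm_zero] at h0
    have hi := le_maxInner hm (fun i => gradient (f i) x) (dSD x) ⟨0, hm⟩
    have hin : -(‖gradient (f ⟨0, hm⟩) x‖ * ‖dSD x‖) ≤ ⟪gradient (f ⟨0, hm⟩) x, dSD x⟫ := by
      have := real_inner_le_norm (gradient (f ⟨0, hm⟩) x) (-(dSD x))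
      rw [inner_neg_right, norm_neg] at this
      linarith
    have hn : (0:ℝ) ≤ ‖dSD x‖ := norm_nonneg _
    have hG : (0:ℝ) ≤ ‖gradient (f ⟨0, hm⟩) x‖ := norm_nonneg _
    nlinarith [mul_nonneg hn hn, mul_nonneg hG hn]
  -- quantitative continuity estimate
  have est : ∀ x y, ‖dSD y - dSD x‖ ^ 2 ≤
      2 * (∑ i, ‖gradient (f i) x - gradient (f i) y‖) * (‖dSD x‖ + ‖dSD y‖) := by
    intro x y
    have k1 := key x (dSD y)
    have k2 := key y (dSD x)
    have l1 := maxInner_lip hm (fun i => gradient (f i) x) (fun i => gradient (f i) y) (dSD y)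
    have l2 := maxInner_lip hm (fun i => gradient (f i) y) (fun i => gradient (f i) x) (dSD x)
    have hsum : (∑ i, ‖gradient (f i) y - gradient (f i) x‖) =
        ∑ i, ‖gradient (f i) x - gradient (f i) y‖ := by
      congr 1; funext i; rw [norm_sub_rev]
    rw [hsum] at l2
    have hrev : ‖dSD x - dSD y‖ = ‖dSD y - dSD x‖ := norm_sub_rev _ _
    rw [hrev] at k2
    nlinarith [k1, k2, l1, l2]
  -- conclude continuity
  rw [continuous_iff_continuousAt]
  intro x
  rw [ContinuousAt, tendsto_iff_norm_sub_tendsto_zero]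
  set S : EuclideanSpace ℝ (Fin n) → ℝ :=
    fun y => ∑ i, ‖gradient (f i) x - gradient (f i) y‖ with hS
  set B : EuclideanSpace ℝ (Fin n) → ℝ :=
    fun y => Real.sqrt (2 * S y * (‖dSD x‖ + 2 * ‖gradient (f ⟨0, hm⟩) y‖)) with hB
  have hbound : ∀ y, ‖dSD y - dSD x‖ ≤ B y := by
    intro y
    have h1 := est x y
    have hSnn : 0 ≤ S y := Finset.sum_nonneg fun i _ => norm_nonneg _
    have h2 : ‖dSD y - dSD x‖ ^ 2 ≤ 2 * S y * (‖dSD x‖ + 2 * ‖gradient (f ⟨0, hm⟩) y‖) := by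
      have := bnd y
      nlinarith [h1, hSnn, norm_nonneg (dSD x), norm_nonneg (dSD y),
        norm_nonneg (gradient (f ⟨0, hm⟩) y)]
    calc ‖dSD y - dSD x‖ = Real.sqrt (‖dSD y - dSD x‖ ^ 2) := by
          rw [Real.sqrt_sq (norm_nonneg _)]
      _ ≤ B y := Real.sqrt_le_sqrt h2
  have htend : Filter.Tendsto B (nhds x) (nhds 0) := by
    have hScont : Continuous S := by
      apply continuous_finset_sum
      intro i _
      exact (continuous_const.sub (hgcont i)).norm
    have hBcont : Continuous B := by
      apply Real.continuous_sqrt.comp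
      exact (continuous_const.mul hScont).mul
        (continuous_const.add (continuous_const.mul (hgcont ⟨0, hm⟩).norm))
    have hBx : B x = 0 := by
      have hSx : S x = 0 := by simp [hS]
      simp [hB, hSx]
    have := hBcont.tendsto x
    rwa [hBx] at this
  exact squeeze_zero (fun y => norm_nonneg _) hbound htend
end

section
/- Let f₁, …, f_m : ℝⁿ → ℝ be differentiable and let x ∈ ℝⁿ. Then there exists λ ∈ Δ_m, with λ minimizing μ ↦ ‖Σ_{i∈[m]} μ_i ∇f_i(x)‖² over Δ_m, such that the steepest descent direction satisfies d_SD(x) = −Σ_{i∈[m]} λ_i ∇f_i(x). In particular, −d_SD(x) lies in the convex hull of {∇f₁(x), …, ∇f_m(x)}. -/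
open RealInnerProductSpace

set_option maxHeartbeats 1000000

/-- `d_SD(x) = −Σ λ_i ∇f_i(x)` for some `λ` in the simplex minimizing
`μ ↦ ‖Σ μ_i ∇f_i(x)‖²`; in particular `−d_SD(x)` lies in the convex hull of the gradients. -/
theorem stmt_5 (n m : ℕ) (hm : 0 < m) (f : Fin m → EuclideanSpace ℝ (Fin n) → ℝ)
    (hf : ∀ i, Differentiable ℝ (f i)) (x : EuclideanSpace ℝ (Fin n))
    (dSD : EuclideanSpace ℝ (Fin n))
    (hdSD : ∀ d : EuclideanSpace ℝ (Fin n),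
      maxInner hm (fun i => gradient (f i) x) dSD + ‖dSD‖ ^ 2 / 2 ≤
        maxInner hm (fun i => gradient (f i) x) d + ‖d‖ ^ 2 / 2) :
    (∃ lam : Fin m → ℝ, (∀ i, 0 ≤ lam i) ∧ (∑ i, lam i = 1) ∧
      (∀ mu : Fin m → ℝ, (∀ i, 0 ≤ mu i) → (∑ i, mu i = 1) →
        ‖∑ i, lam i • gradient (f i) x‖ ^ 2 ≤ ‖∑ i, mu i • gradient (f i) x‖ ^ 2) ∧
      dSD = -∑ i, lam i • gradient (f i) x) ∧
    -dSD ∈ convexHull ℝ (Set.range fun i => gradient (f i) x) := by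
  classical
  set g : Fin m → EuclideanSpace ℝ (Fin n) := fun i => gradient (f i) x with hg
  -- existence of a minimizer over the standard simplex
  have hcont : Continuous fun μ : Fin m → ℝ => ‖∑ i, μ i • g i‖ ^ 2 := by
    have : Continuous fun μ : Fin m → ℝ => ∑ i, μ i • g i := by
      apply continuous_finset_sum
      intro i _
      exact (continuous_apply i).smul continuous_const
    exact (this.norm).pow 2
  have hne : (stdSimplex ℝ (Fin m)).Nonempty :=
    ⟨Pi.single ⟨0, hm⟩ 1, single_mem_stdSimplex ℝ _⟩
  obtain ⟨lam, hlamΔ, hmin⟩ :=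
    (isCompact_stdSimplex ℝ (Fin m)).exists_isMinOn hne hcont.continuousOn
  obtain ⟨hlam0, hlam1⟩ := hlamΔ
  set u : EuclideanSpace ℝ (Fin n) := ∑ i, lam i • g i with hu
  -- variational inequality
  have hvar : ∀ ν ∈ stdSimplex ℝ (Fin m), 0 ≤ ⟪u, (∑ i, ν i • g i) - u⟫ := by
    intro ν hν
    set v : EuclideanSpace ℝ (Fin n) := ∑ i, ν i • g i with hv
    set c : ℝ := ⟪u, v - u⟫ with hc
    set B : ℝ := ‖v - u‖ ^ 2 with hB
    have hB0 : 0 ≤ B := by positivity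
    have key : ∀ t : ℝ, 0 < t → t ≤ 1 → 0 ≤ 2 * t * c + t ^ 2 * B := by
      intro t ht0 ht1
      have hmem : (fun i => lam i + t * (ν i - lam i)) ∈ stdSimplex ℝ (Fin m) := by
        constructor
        · intro i
          have h1 := hν.1 i
          have h2 := hlam0 i
          dsimp only
          nlinarith
        · rw [Finset.sum_add_distrib, ← Finset.mul_sum, Finset.sum_sub_distrib,
            hlam1, hν.2]
          ring
      have hsum : ∑ i, (lam i + t * (ν i - lam i)) • g i = u + t • (v - u) := by
        rw [hu, hv, smul_sub, Finset.smul_sum, Finset.smul_sum,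
          ← Finset.sum_sub_distrib, ← Finset.sum_add_distrib]
        refine Finset.sum_congr rfl fun i _ => ?_
        rw [add_smul, mul_smul, sub_smul, smul_sub]
      have hle := hmin hmem
      simp only [Set.mem_setOf_eq, hsum] at hle
      have hexp : ‖u + t • (v - u)‖ ^ 2 = ‖u‖ ^ 2 + 2 * t * c + t ^ 2 * B := by
        rw [hB, hc, norm_add_sq_real, inner_smul_right, norm_smul]
        simp [Real.norm_eq_abs, abs_of_pos ht0, mul_pow]
        ring
      have : ‖u‖ ^ 2 ≤ ‖u‖ ^ 2 + 2 * t * c + t ^ 2 * B := by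
        rw [← hexp]; exact hle
      linarith
    by_contra hcneg
    push_neg at hcneg
    have hBc : 0 < B - c := by linarith
    set t : ℝ := -c / (B - c) with htdef
    have ht0 : 0 < t := div_pos (by linarith) hBc
    have ht1 : t ≤ 1 := by
      rw [htdef, div_le_one hBc]; linarith
    have htB : t * (B - c) = -c := by
      rw [htdef]; field_simp
    have hk := key t ht0 ht1
    nlinarith [mul_pos ht0 ht0]
  -- consequence: each gradient has large inner product with u
  have hkey : ∀ i, ‖u‖ ^ 2 ≤ ⟪g i, u⟫ := by
    intro i
    have h1 := hvar (fun j => if i = j then (1:ℝ) else 0) (ite_eq_mem_stdSimplex ℝ i)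
    have h2 : ∑ j, (if i = j then (1:ℝ) else 0) • g j = g i := by simp
    rw [h2, inner_sub_right, real_inner_self_eq_norm_sq] at h1
    rw [real_inner_comm]
    linarith
  have huu : ⟪u, u⟫ = ‖u‖ ^ 2 := real_inner_self_eq_norm_sq u
  -- lower bound on inner product with maxInner
  have hmaxlb : ∀ d : EuclideanSpace ℝ (Fin n), ⟪u, d⟫ ≤ maxInner hm g d := by
    intro d
    have h1 : ⟪u, d⟫ = ∑ i, lam i * ⟪g i, d⟫ := by
      rw [hu, sum_inner]
      exact Finset.sum_congr rfl fun i _ => real_inner_smul_left (g i) d (lam i)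
    rw [h1]
    unfold maxInner
    calc ∑ i, lam i * ⟪g i, d⟫
        ≤ ∑ i, lam i * (Finset.univ.sup' ⟨⟨0, hm⟩, Finset.mem_univ _⟩ fun i => ⟪g i, d⟫) := by
          apply Finset.sum_le_sum
          intro i _
          exact mul_le_mul_of_nonneg_left (Finset.le_sup' (fun i => ⟪g i, d⟫) (Finset.mem_univ i)) (hlam0 i)
      _ = _ := by rw [← Finset.sum_mul, hlam1, one_mul]
  -- upper bound at d = -u
  have hmaxub : maxInner hm g (-u) ≤ -‖u‖ ^ 2 := by
    unfold maxInner
    apply Finset.sup'_le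
    intro i _
    rw [inner_neg_right]
    linarith [hkey i]
  -- dSD = -u
  have hDSD : dSD = -u := by
    have h1 := hdSD (-u)
    have h2 : maxInner hm g (-u) + ‖-u‖ ^ 2 / 2 ≤ -(‖u‖ ^ 2) / 2 := by
      rw [norm_neg]; linarith
    have h3 : -(‖u‖ ^ 2) / 2 + ‖u + dSD‖ ^ 2 / 2 ≤ maxInner hm g dSD + ‖dSD‖ ^ 2 / 2 := by
      have h4 := hmaxlb dSD
      have h5 : ‖u + dSD‖ ^ 2 = ‖u‖ ^ 2 + 2 * ⟪u, dSD⟫ + ‖dSD‖ ^ 2 := norm_add_sq_real u dSD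
      nlinarith
    have h6 : ‖u + dSD‖ ^ 2 ≤ 0 := by linarith
    have h7 : u + dSD = 0 := by
      have := norm_nonneg (u + dSD)
      have : ‖u + dSD‖ = 0 := by nlinarith
      exact norm_eq_zero.mp this
    have : dSD = -u := by
      rw [eq_neg_iff_add_eq_zero, add_comm]; exact h7
    exact this
  constructor
  · refine ⟨lam, hlam0, hlam1, ?_, ?_⟩
    · intro mu hmu0 hmu1
      exact isMinOn_iff.mp hmin mu ⟨hmu0, hmu1⟩
    · rw [hDSD]
  · rw [hDSD, neg_neg, hu]
    have h := Finset.centerMass_mem_convexHull (Finset.univ : Finset (Fin m))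
      (fun i _ => hlam0 i) (by rw [hlam1]; norm_num)
      (fun i _ => Set.mem_range_self (f := fun i => gradient (f i) x) i)
    rwa [Finset.centerMass_eq_of_sum_1 _ _ hlam1] at h
end

section
/- Let f₁, …, f_m : ℝⁿ → ℝ be differentiable, let x ∈ ℝⁿ, and let B ∈ ℝ^{n×n} be a symmetric positive definite matrix. Let d(x) be the unique minimizer of d ↦ max_{i∈[m]} ⟨∇f_i(x), d⟩ + ½ dᵀBd and θ(x) its minimum value. If x is not Pareto critical, then d(x) ≠ 0 and d(x) is a descent direction, i.e. ⟨∇f_i(x), d(x)⟩ < 0 for every i ∈ [m]. -/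
open RealInnerProductSpace

/-- The quadratic form `dᵀ B d` of a matrix `B`. -/
noncomputable def quadForm {n : ℕ} (B : Matrix (Fin n) (Fin n) ℝ)
    (d : EuclideanSpace ℝ (Fin n)) : ℝ :=
  ⟪d, Matrix.toEuclideanLin B d⟫

lemma quadForm_nonneg {n : ℕ} {B : Matrix (Fin n) (Fin n) ℝ} (hB : B.PosDef)
    (d : EuclideanSpace ℝ (Fin n)) : 0 ≤ quadForm B d := by
  have := hB.posSemidef.dotProduct_mulVec_nonneg (WithLp.equiv 2 (Fin n → ℝ) d)
  simpa [quadForm, Matrix.toEuclideanLin_apply, PiLp.inner_apply, dotProduct,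
    RCLike.inner_apply, star, mul_comm] using this

lemma maxInner_smul {n m : ℕ} (hm : 0 < m) (g : Fin m → EuclideanSpace ℝ (Fin n))
    (d : EuclideanSpace ℝ (Fin n)) {t : ℝ} (ht : 0 ≤ t) :
    maxInner hm g (t • d) = t * maxInner hm g d := by
  unfold maxInner
  simp only [inner_smul_right]
  rw [eq_comm]
  exact Finset.comp_sup'_eq_sup'_comp _ (fun y => t * y) (fun a b => mul_max_of_nonneg a b ht)

lemma quadForm_smul {n : ℕ} (B : Matrix (Fin n) (Fin n) ℝ)
    (d : EuclideanSpace ℝ (Fin n)) (t : ℝ) :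
    quadForm B (t • d) = t ^ 2 * quadForm B d := by
  unfold quadForm
  rw [map_smul, inner_smul_right, real_inner_smul_left]
  ring

/-- if `x` is not Pareto critical, then the minimizer `d(x)` of
`d ↦ max_i ⟪∇f_i(x), d⟫ + ½ dᵀBd` is nonzero and is a descent direction. -/
theorem stmt_6 (n m : ℕ) (hm : 0 < m) (f : Fin m → EuclideanSpace ℝ (Fin n) → ℝ)
    (hf : ∀ i, Differentiable ℝ (f i)) (x : EuclideanSpace ℝ (Fin n))
    (B : Matrix (Fin n) (Fin n) ℝ) (hB : B.PosDef)
    (dx : EuclideanSpace ℝ (Fin n))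
    (hdx : ∀ d : EuclideanSpace ℝ (Fin n),
      maxInner hm (fun i => gradient (f i) x) dx + quadForm B dx / 2 ≤
        maxInner hm (fun i => gradient (f i) x) d + quadForm B d / 2)
    (hx : ¬ ParetoCritical f x) :
    dx ≠ 0 ∧ ∀ i : Fin m, ⟪gradient (f i) x, dx⟫ < 0 := by
  set g : Fin m → EuclideanSpace ℝ (Fin n) := fun i => gradient (f i) x with hg
  obtain ⟨d, hd⟩ : ∃ d, ∀ i, ⟪g i, d⟫ < 0 := by
    simp only [ParetoCritical, not_forall, not_exists, not_le] at hx
    exact hx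
  set M := maxInner hm g d with hM
  have hMneg : M < 0 := by
    rw [hM, maxInner]
    exact (Finset.sup'_lt_iff _).mpr fun i _ => hd i
  set q := quadForm B d with hq
  have hqnn : 0 ≤ q := quadForm_nonneg hB d
  -- choose t = -M / (q + 1) > 0
  set t : ℝ := -M / (q + 1) with htdef
  have hq1 : (0:ℝ) < q + 1 := by linarith
  have htpos : 0 < t := div_pos (by linarith) hq1
  have hval : maxInner hm g (t • d) + quadForm B (t • d) / 2 < 0 := by
    rw [maxInner_smul hm g d htpos.le, quadForm_smul]
    have h1 : t * M + t ^ 2 * q / 2 = t * (M + t * q / 2) := by ring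
    rw [h1]
    apply mul_neg_of_pos_of_neg htpos
    have : t * q ≤ -M := by
      rw [htdef, div_mul_eq_mul_div, div_le_iff₀ hq1]
      nlinarith
    nlinarith
  have hφdx : maxInner hm g dx + quadForm B dx / 2 < 0 := lt_of_le_of_lt (hdx (t • d)) hval
  have hMdx : maxInner hm g dx < 0 := by
    have := quadForm_nonneg hB dx
    linarith
  constructor
  · intro h0
    rw [h0] at hφdx
    have : maxInner hm g 0 = 0 := by
      rw [maxInner]
      simp
      exact Finset.sup'_const _ _
    rw [this, quadForm, inner_zero_left] at hφdx
    norm_num at hφdx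
  · intro i
    have := Finset.le_sup' (fun j => ⟪g j, dx⟫) (Finset.mem_univ i)
    exact lt_of_le_of_lt this hMdx
end

section
/- Let f₁, …, f_m : ℝⁿ → ℝ be differentiable, let x ∈ ℝⁿ, and let B ∈ ℝ^{n×n} be a symmetric positive definite matrix. Let d(x) be the unique minimizer of d ↦ max_{i∈[m]} ⟨∇f_i(x), d⟩ + ½ dᵀBd. Then max_{i∈[m]} ⟨∇f_i(x), d(x)⟩ ≤ −½ d(x)ᵀ B d(x). -/
open RealInnerProductSpace

/-- `max_i ⟪∇f_i(x), d(x)⟫ ≤ −½ d(x)ᵀ B d(x)` for the minimizer `d(x)` of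
`d ↦ max_i ⟪∇f_i(x), d⟫ + ½ dᵀBd`. -/
theorem stmt_8 (n m : ℕ) (hm : 0 < m) (f : Fin m → EuclideanSpace ℝ (Fin n) → ℝ)
    (hf : ∀ i, Differentiable ℝ (f i)) (x : EuclideanSpace ℝ (Fin n))
    (B : Matrix (Fin n) (Fin n) ℝ) (hB : B.PosDef)
    (dx : EuclideanSpace ℝ (Fin n))
    (hdx : ∀ d : EuclideanSpace ℝ (Fin n),
      maxInner hm (fun i => gradient (f i) x) dx + quadForm B dx / 2 ≤
        maxInner hm (fun i => gradient (f i) x) d + quadForm B d / 2) :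
    maxInner hm (fun i => gradient (f i) x) dx ≤ -(1 / 2) * quadForm B dx := by
  have h := hdx 0
  have h1 : maxInner hm (fun i => gradient (f i) x) 0 = 0 := by
    simp [maxInner]
    exact le_antisymm (Finset.sup'_le _ _ fun _ _ => le_rfl) (Finset.le_sup'_of_le _ (Finset.mem_univ ⟨0, hm⟩) le_rfl)
  have h2 : quadForm B (0 : EuclideanSpace ℝ (Fin n)) = 0 := by
    simp [quadForm]
  rw [h1, h2] at h
  linarith
end

section
/- Let f₁, …, f_m : ℝⁿ → ℝ be continuously differentiable and bounded below, and let {x_k} ⊂ ℝⁿ be a sequence such that for some ω > 0 and for all k ≥ 0 and all i ∈ [m], f_i(x_k) − f_i(x_{k+1}) ≥ ω ‖d_SD(x_k)‖². Then every accumulation point x* of {x_k} is Pareto critical for (f₁, …, f_m), i.e. for every d ∈ ℝⁿ there exists i ∈ [m] with ⟨∇f_i(x*), d⟩ ≥ 0. -/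
open RealInnerProductSpace

lemma maxInner_tendsto {n m : ℕ} (hm : 0 < m)
    {g : ℕ → Fin m → EuclideanSpace ℝ (Fin n)} {glim : Fin m → EuclideanSpace ℝ (Fin n)}
    {ds : ℕ → EuclideanSpace ℝ (Fin n)} {dlim : EuclideanSpace ℝ (Fin n)}
    (hg : ∀ i, Filter.Tendsto (fun j => g j i) Filter.atTop (nhds (glim i)))
    (hd : Filter.Tendsto ds Filter.atTop (nhds dlim)) :
    Filter.Tendsto (fun j => maxInner hm (g j) (ds j)) Filter.atTop
      (nhds (maxInner hm glim dlim)) := by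
  unfold maxInner
  exact Filter.Tendsto.finset_sup'_nhds_apply _ (fun i _ => (hg i).inner hd)

/-- under the sufficient decrease condition, every accumulation point of
the iterate sequence is Pareto critical. -/
theorem stmt_13 (n m : ℕ) (hm : 0 < m) (f : Fin m → EuclideanSpace ℝ (Fin n) → ℝ)
    (hf : ∀ i, ContDiff ℝ 1 (f i))
    (hbdd : ∀ i : Fin m, ∃ c : ℝ, ∀ y : EuclideanSpace ℝ (Fin n), c ≤ f i y)
    (dSD : EuclideanSpace ℝ (Fin n) → EuclideanSpace ℝ (Fin n))
    (hdSD : ∀ y d : EuclideanSpace ℝ (Fin n),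
      maxInner hm (fun i => gradient (f i) y) (dSD y) + ‖dSD y‖ ^ 2 / 2 ≤
        maxInner hm (fun i => gradient (f i) y) d + ‖d‖ ^ 2 / 2)
    (x : ℕ → EuclideanSpace ℝ (Fin n)) (ω : ℝ) (hω : 0 < ω)
    (hdec : ∀ k : ℕ, ∀ i : Fin m, ω * ‖dSD (x k)‖ ^ 2 ≤ f i (x k) - f i (x (k + 1)))
    (xstar : EuclideanSpace ℝ (Fin n)) (hacc : MapClusterPt xstar Filter.atTop x) :
    ∀ d : EuclideanSpace ℝ (Fin n), ∃ i : Fin m, 0 ≤ ⟪gradient (f i) xstar, d⟫ := by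
  classical
  set i₀ : Fin m := ⟨0, hm⟩
  -- Step 1 : dSD (x k) → 0
  set a : ℕ → ℝ := fun k => f i₀ (x k) with ha
  have hanti : Antitone a := by
    apply antitone_nat_of_succ_le
    intro k
    have := hdec k i₀
    have h0 : 0 ≤ ω * ‖dSD (x k)‖ ^ 2 := by positivity
    simp only [ha]; linarith
  have hbb : BddBelow (Set.range a) := by
    obtain ⟨c, hc⟩ := hbdd i₀
    exact ⟨c, by rintro _ ⟨k, rfl⟩; exact hc _⟩
  have hconv : Filter.Tendsto a Filter.atTop (nhds (⨅ k, a k)) :=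
    tendsto_atTop_ciInf hanti hbb
  have hdiff : Filter.Tendsto (fun k => a k - a (k + 1)) Filter.atTop (nhds 0) := by
    have h2 : Filter.Tendsto (fun k => a (k + 1)) Filter.atTop (nhds (⨅ k, a k)) :=
      hconv.comp (Filter.tendsto_add_atTop_nat 1)
    simpa using hconv.sub h2
  have hsq : Filter.Tendsto (fun k => ω * ‖dSD (x k)‖ ^ 2) Filter.atTop (nhds 0) :=
    squeeze_zero (fun k => by positivity) (fun k => hdec k i₀) hdiff
  have hsq2 : Filter.Tendsto (fun k => ‖dSD (x k)‖ ^ 2) Filter.atTop (nhds 0) := by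
    have := hsq.const_mul ω⁻¹
    simp only [mul_zero] at this
    convert this using 2 with k
    field_simp
  have hnorm : Filter.Tendsto (fun k => ‖dSD (x k)‖) Filter.atTop (nhds 0) := by
    have h3 : Filter.Tendsto (fun k => Real.sqrt (‖dSD (x k)‖ ^ 2)) Filter.atTop
        (nhds (Real.sqrt 0)) := (Real.continuous_sqrt.tendsto 0).comp hsq2
    simpa [Real.sqrt_sq (norm_nonneg _)] using h3
  have hd0 : Filter.Tendsto (fun k => dSD (x k)) Filter.atTop (nhds 0) :=
    tendsto_zero_iff_norm_tendsto_zero.2 hnorm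
  -- Step 2 : gradients are continuous
  have hgc : ∀ i, Continuous (gradient (f i)) := by
    intro i
    have h1 : Continuous fun y => fderiv ℝ (f i) y := (hf i).continuous_fderiv one_ne_zero
    exact (InnerProductSpace.toDual ℝ (EuclideanSpace ℝ (Fin n))).symm.continuous.comp h1
  -- Step 3 : subsequence converging to xstar
  obtain ⟨ψ, hψmono, hψ⟩ := TopologicalSpace.FirstCountableTopology.tendsto_subseq hacc
  -- Step 4 : by contradiction
  intro d
  by_contra hcon
  push_neg at hcon
  have hd_ne : d ≠ 0 := by
    intro h
    have := hcon i₀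
    simp [h] at this
  set glim : Fin m → EuclideanSpace ℝ (Fin n) := fun i => gradient (f i) xstar with hglim
  set M : ℝ := maxInner hm glim d with hM
  have hMlt : M < 0 := by
    rw [hM]
    unfold maxInner
    refine (Finset.sup'_lt_iff _).2 ?_
    exact fun i _ => hcon i
  have hr : (0:ℝ) < ‖d‖ := norm_pos_iff.2 hd_ne
  set t : ℝ := -M / ‖d‖ ^ 2 with ht
  have htpos : 0 < t := by
    apply div_pos (by linarith) (by positivity)
  -- limits along the subsequence
  have hgψ : ∀ i, Filter.Tendsto (fun j => gradient (f i) (x (ψ j))) Filter.atTop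
      (nhds (glim i)) := fun i => ((hgc i).tendsto xstar).comp hψ
  have hdψ : Filter.Tendsto (fun j => dSD (x (ψ j))) Filter.atTop (nhds 0) :=
    hd0.comp hψmono.tendsto_atTop
  -- A_j ≤ B_j
  set A : ℕ → ℝ := fun j =>
    maxInner hm (fun i => gradient (f i) (x (ψ j))) (dSD (x (ψ j))) + ‖dSD (x (ψ j))‖ ^ 2 / 2
  set B : ℕ → ℝ := fun j =>
    maxInner hm (fun i => gradient (f i) (x (ψ j))) (t • d) + ‖t • d‖ ^ 2 / 2
  have hAB : ∀ j, A j ≤ B j := fun j => hdSD (x (ψ j)) (t • d)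
  have hA : Filter.Tendsto A Filter.atTop (nhds (maxInner hm glim 0 + ‖(0:EuclideanSpace ℝ (Fin n))‖ ^ 2 / 2)) := by
    apply Filter.Tendsto.add
    · exact maxInner_tendsto hm hgψ hdψ
    · have : Filter.Tendsto (fun j => ‖dSD (x (ψ j))‖) Filter.atTop (nhds 0) :=
        hnorm.comp hψmono.tendsto_atTop
      have h2 := ((this.pow 2).div_const 2)
      simpa using h2
  have hA0 : maxInner hm glim 0 + ‖(0:EuclideanSpace ℝ (Fin n))‖ ^ 2 / 2 = 0 := by
    simp [maxInner]
    exact Finset.sup'_const _ _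
  rw [hA0] at hA
  have hB : Filter.Tendsto B Filter.atTop (nhds (maxInner hm glim (t • d) + ‖t • d‖ ^ 2 / 2)) := by
    apply Filter.Tendsto.add
    · exact maxInner_tendsto hm hgψ tendsto_const_nhds
    · exact tendsto_const_nhds
  have hle : (0:ℝ) ≤ maxInner hm glim (t • d) + ‖t • d‖ ^ 2 / 2 :=
    le_of_tendsto_of_tendsto' hA hB hAB
  -- but the limit of B is negative
  have hmax_le : maxInner hm glim (t • d) ≤ t * M := by
    unfold maxInner
    apply Finset.sup'_le
    intro i _
    rw [real_inner_smul_right]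
    have hiM : ⟪glim i, d⟫ ≤ M := by
      rw [hM]; unfold maxInner
      exact Finset.le_sup' (fun i => ⟪glim i, d⟫) (Finset.mem_univ i)
    exact mul_le_mul_of_nonneg_left hiM htpos.le
  have hnsmul : ‖t • d‖ ^ 2 = t ^ 2 * ‖d‖ ^ 2 := by
    rw [norm_smul, mul_pow, Real.norm_eq_abs, sq_abs]
  have hneg : maxInner hm glim (t • d) + ‖t • d‖ ^ 2 / 2 < 0 := by
    rw [hnsmul]
    have htM : t * M = -(M ^ 2) / ‖d‖ ^ 2 := by
      rw [ht]; field_simp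
    have ht2 : t ^ 2 * ‖d‖ ^ 2 = M ^ 2 / ‖d‖ ^ 2 := by
      rw [ht]; field_simp
    have hMne : M ≠ 0 := hMlt.ne
    have hM2 : 0 < M ^ 2 / ‖d‖ ^ 2 := by positivity
    calc maxInner hm glim (t • d) + t ^ 2 * ‖d‖ ^ 2 / 2
        ≤ t * M + t ^ 2 * ‖d‖ ^ 2 / 2 := by linarith
      _ = -(M ^ 2) / ‖d‖ ^ 2 + M ^ 2 / ‖d‖ ^ 2 / 2 := by rw [htM, ht2]
      _ = -(M ^ 2 / ‖d‖ ^ 2) / 2 := by ring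
      _ < 0 := by linarith
  linarith
end

section
/- Let f₁, …, f_m : ℝⁿ → ℝ be differentiable and U-strongly convex for some U > 0, i.e. f_i(y) − f_i(x) − ⟨∇f_i(x), y − x⟩ ≥ (U/2)‖y − x‖² for all x, y and all i. Let x, x* ∈ ℝⁿ and λ ∈ Δ_m be such that d_SD(x) = −Σ_{i∈[m]} λ_i ∇f_i(x) and Σ_{i∈[m]} λ_i f_i(x*) ≤ Σ_{i∈[m]} λ_i f_i(x). Then (U/2) ‖x* − x‖ ≤ ‖d_SD(x)‖. -/
open RealInnerProductSpace

/-- for `U`-strongly convex objectives, if `d_SD(x) = −Σ λ_i ∇f_i(x)` with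
`λ ∈ Δ_m` and `Σ λ_i f_i(x*) ≤ Σ λ_i f_i(x)`, then `(U/2)‖x* − x‖ ≤ ‖d_SD(x)‖`. -/
theorem stmt_14 (n m : ℕ) (hm : 0 < m) (f : Fin m → EuclideanSpace ℝ (Fin n) → ℝ)
    (hf : ∀ i, Differentiable ℝ (f i)) (U : ℝ) (hU : 0 < U)
    (hsc : ∀ i : Fin m, ∀ y z : EuclideanSpace ℝ (Fin n),
      U / 2 * ‖z - y‖ ^ 2 ≤ f i z - f i y - ⟪gradient (f i) y, z - y⟫)
    (x xstar : EuclideanSpace ℝ (Fin n)) (dSD : EuclideanSpace ℝ (Fin n))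
    (hdSD : ∀ d : EuclideanSpace ℝ (Fin n),
      maxInner hm (fun i => gradient (f i) x) dSD + ‖dSD‖ ^ 2 / 2 ≤
        maxInner hm (fun i => gradient (f i) x) d + ‖d‖ ^ 2 / 2)
    (lam : Fin m → ℝ) (hlam0 : ∀ i, 0 ≤ lam i) (hlam1 : ∑ i, lam i = 1)
    (hform : dSD = -∑ i, lam i • gradient (f i) x)
    (hval : ∑ i, lam i * f i xstar ≤ ∑ i, lam i * f i x) :
    U / 2 * ‖xstar - x‖ ≤ ‖dSD‖ := by
  have key : U / 2 * ‖xstar - x‖ ^ 2 ≤ ⟪dSD, xstar - x⟫ := by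
    have h1 : ∀ i, lam i * (U / 2 * ‖xstar - x‖ ^ 2) ≤
        lam i * (f i xstar - f i x - ⟪gradient (f i) x, xstar - x⟫) := fun i =>
      mul_le_mul_of_nonneg_left (hsc i x xstar) (hlam0 i)
    have h2 := Finset.sum_le_sum (fun i (_ : i ∈ Finset.univ) => h1 i)
    rw [← Finset.sum_mul, hlam1, one_mul] at h2
    have h3 : ⟪dSD, xstar - x⟫ = -∑ i, lam i * ⟪gradient (f i) x, xstar - x⟫ := by
      rw [hform, inner_neg_left, sum_inner]
      simp only [real_inner_smul_left]
    rw [h3]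
    have h4 : ∑ i, lam i * (f i xstar - f i x - ⟪gradient (f i) x, xstar - x⟫) =
        (∑ i, lam i * f i xstar) - (∑ i, lam i * f i x)
          - ∑ i, lam i * ⟪gradient (f i) x, xstar - x⟫ := by
      rw [← Finset.sum_sub_distrib, ← Finset.sum_sub_distrib]
      congr 1; ext i; ring
    rw [h4] at h2
    linarith
  have h5 : ⟪dSD, xstar - x⟫ ≤ ‖dSD‖ * ‖xstar - x‖ := real_inner_le_norm _ _
  rcases eq_or_lt_of_le (norm_nonneg (xstar - x)) with h | h
  · rw [← h, mul_zero]; exact norm_nonneg _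
  · nlinarith [norm_nonneg dSD]
end

section
/- Let 0 < U ≤ L, and let f₁, …, f_m : ℝⁿ → ℝ be twice continuously differentiable with U‖z‖² ≤ zᵀ∇²f_i(x)z ≤ L‖z‖² for all x, z ∈ ℝⁿ and all i ∈ [m]. Let λ* ∈ Δ_m and x* ∈ ℝⁿ satisfy Σ_{i∈[m]} λ*_i ∇f_i(x*) = 0, and let x ∈ ℝⁿ satisfy (U/2)‖x* − x‖ ≤ ‖d_SD(x)‖. Then Σ_{i∈[m]} λ*_i f_i(x) − Σ_{i∈[m]} λ*_i f_i(x*) ≤ (2L/U²) ‖d_SD(x)‖². -/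
open RealInnerProductSpace

noncomputable def hessQF {n : ℕ} (f : EuclideanSpace ℝ (Fin n) → ℝ)
    (x z : EuclideanSpace ℝ (Fin n)) : ℝ :=
  iteratedFDeriv ℝ 2 f x ![z, z]

/-- under the Hessian bounds, criticality of `x*` for `λ*`, and
`(U/2)‖x*−x‖ ≤ ‖d_SD(x)‖`, one has
`Σ λ*_i f_i(x) − Σ λ*_i f_i(x*) ≤ (2L/U²)‖d_SD(x)‖²`. -/
theorem stmt_16 (n m : ℕ) (hm : 0 < m) (U L : ℝ) (hU : 0 < U) (hUL : U ≤ L)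
    (f : Fin m → EuclideanSpace ℝ (Fin n) → ℝ) (hf : ∀ i, ContDiff ℝ 2 (f i))
    (hhess : ∀ i : Fin m, ∀ x z : EuclideanSpace ℝ (Fin n),
      U * ‖z‖ ^ 2 ≤ hessQF (f i) x z ∧ hessQF (f i) x z ≤ L * ‖z‖ ^ 2)
    (lam : Fin m → ℝ) (hlam0 : ∀ i, 0 ≤ lam i) (hlam1 : ∑ i, lam i = 1)
    (xstar : EuclideanSpace ℝ (Fin n))
    (hcrit : ∑ i, lam i • gradient (f i) xstar = 0)
    (x : EuclideanSpace ℝ (Fin n)) (dSD : EuclideanSpace ℝ (Fin n))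
    (hdSD : ∀ d : EuclideanSpace ℝ (Fin n),
      maxInner hm (fun i => gradient (f i) x) dSD + ‖dSD‖ ^ 2 / 2 ≤
        maxInner hm (fun i => gradient (f i) x) d + ‖d‖ ^ 2 / 2)
    (hdist : U / 2 * ‖xstar - x‖ ≤ ‖dSD‖) :
    ∑ i, lam i * f i x - ∑ i, lam i * f i xstar ≤ 2 * L / U ^ 2 * ‖dSD‖ ^ 2 := by
  classical
  set v : EuclideanSpace ℝ (Fin n) := x - xstar with hv
  set c : ℝ → EuclideanSpace ℝ (Fin n) := fun t => xstar + t • v with hc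
  have hcderiv : ∀ t : ℝ, HasDerivAt c v t := by
    intro t
    simpa [hc] using ((hasDerivAt_id t).smul_const v).const_add xstar
  have hdiff1 : ∀ i, Differentiable ℝ (f i) := fun i => (hf i).differentiable two_ne_zero
  have hdiff2 : ∀ i, Differentiable ℝ (fderiv ℝ (f i)) := fun i =>
    ((hf i).fderiv_right (m := 1) (le_refl 2)).differentiable one_ne_zero
  have hA : ∀ i t, HasDerivAt (fun t => f i (c t)) (fderiv ℝ (f i) (c t) v) t := by
    intro i t
    exact ((hdiff1 i (c t)).hasFDerivAt).comp_hasDerivAt t (hcderiv t)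
  have hB : ∀ i t, HasDerivAt (fun t => fderiv ℝ (f i) (c t) v)
      (hessQF (f i) (c t) v) t := by
    intro i t
    have h1 : HasFDerivAt (fun y => fderiv ℝ (f i) y v)
        ((ContinuousLinearMap.apply ℝ ℝ v).comp (fderiv ℝ (fderiv ℝ (f i)) (c t))) (c t) :=
      (ContinuousLinearMap.apply ℝ ℝ v).hasFDerivAt.comp _ ((hdiff2 i (c t)).hasFDerivAt)
    have h2 := h1.comp_hasDerivAt t (hcderiv t)
    have heq : hessQF (f i) (c t) v = fderiv ℝ (fderiv ℝ (f i)) (c t) v v := by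
      rw [hessQF, iteratedFDeriv_two_apply]; simp
    rw [heq]
    exact h2
  set K : ℝ := L * ‖v‖ ^ 2 with hK
  set g' : ℝ → ℝ := fun t => ∑ i, lam i * fderiv ℝ (f i) (c t) v with hg'
  set q : ℝ → ℝ := fun t => (∑ i, lam i * f i (c t)) - K / 2 * t ^ 2 with hq
  set q' : ℝ → ℝ := fun t => g' t - K * t with hq'def
  have hqderiv : ∀ t, HasDerivAt q (q' t) t := by
    intro t
    have h1 : HasDerivAt (fun t => ∑ i, lam i * f i (c t)) (g' t) t :=
      HasDerivAt.fun_sum fun i _ => (hA i t).const_mul (lam i)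
    have h2 : HasDerivAt (fun t : ℝ => K / 2 * t ^ 2) (K * t) t := by
      have h3 := (hasDerivAt_pow 2 t).const_mul (K / 2)
      rw [show K * t = K / 2 * (↑(2:ℕ) * t ^ (2 - 1)) by push_cast; ring]
      exact h3
    exact h1.sub h2
  have hq'deriv : ∀ t, HasDerivAt q' ((∑ i, lam i * hessQF (f i) (c t) v) - K) t := by
    intro t
    have h1 : HasDerivAt g' (∑ i, lam i * hessQF (f i) (c t) v) t :=
      HasDerivAt.fun_sum fun i _ => (hB i t).const_mul (lam i)
    have h2 : HasDerivAt (fun t : ℝ => K * t) (K * 1) t := (hasDerivAt_id t).const_mul K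
    have h4 := h1.sub h2
    simp only [mul_one] at h4
    exact h4
  have hsecond : ∀ t, (∑ i, lam i * hessQF (f i) (c t) v) - K ≤ 0 := by
    intro t
    have h1 : ∑ i, lam i * hessQF (f i) (c t) v ≤ ∑ i, lam i * (L * ‖v‖ ^ 2) := by
      refine Finset.sum_le_sum fun i _ => ?_
      exact mul_le_mul_of_nonneg_left ((hhess i (c t) v).2) (hlam0 i)
    have h2 : ∑ i, lam i * (L * ‖v‖ ^ 2) = K := by
      rw [← Finset.sum_mul, hlam1, one_mul]
    linarith
  have hq'anti : Antitone q' := by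
    refine antitone_of_deriv_nonpos (fun t => (hq'deriv t).differentiableAt) fun t => ?_
    rw [(hq'deriv t).deriv]
    exact hsecond t
  have hc0 : c 0 = xstar := by simp [hc]
  have hq'0 : q' 0 = 0 := by
    have h1 : ∀ i, fderiv ℝ (f i) xstar v = ⟪gradient (f i) xstar, v⟫ := by
      intro i
      rw [gradient]
      exact (InnerProductSpace.toDual_symm_apply).symm
    have h2 : g' 0 = ⟪∑ i, lam i • gradient (f i) xstar, v⟫ := by
      rw [sum_inner]
      simp only [hg', hc0]
      refine Finset.sum_congr rfl fun i _ => ?_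
      rw [h1 i, real_inner_smul_left]
    simp [hq'def, h2, hcrit]
  have hq'nonpos : ∀ t ∈ Set.Ioo (0:ℝ) 1, deriv q t ≤ 0 := by
    intro t ht
    rw [(hqderiv t).deriv]
    have := hq'anti (le_of_lt ht.1)
    rw [hq'0] at this
    exact this
  have hqanti : AntitoneOn q (Set.Icc 0 1) := by
    refine antitoneOn_of_deriv_nonpos (convex_Icc 0 1)
      (fun t _ => (hqderiv t).differentiableAt.continuousAt.continuousWithinAt)
      (fun t _ => (hqderiv t).differentiableAt.differentiableWithinAt) fun t ht => ?_
    rw [interior_Icc] at ht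
    exact hq'nonpos t ht
  have hkey : q 1 ≤ q 0 := hqanti (Set.left_mem_Icc.2 zero_le_one)
    (Set.right_mem_Icc.2 zero_le_one) zero_le_one
  have hc1 : c 1 = x := by simp [hc, hv]
  have hmain : (∑ i, lam i * f i x) - (∑ i, lam i * f i xstar) ≤ K / 2 := by
    have h0 : q 0 = ∑ i, lam i * f i xstar := by simp [hq, hc0]
    have h1 : q 1 = (∑ i, lam i * f i x) - K / 2 := by simp [hq, hc1]
    rw [h0, h1] at hkey
    linarith
  have hnv : ‖v‖ = ‖xstar - x‖ := by rw [hv, norm_sub_rev]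
  have hsq : (U / 2 * ‖xstar - x‖) ^ 2 ≤ ‖dSD‖ ^ 2 :=
    pow_le_pow_left₀ (by positivity) hdist 2
  have hfin : K / 2 ≤ 2 * L / U ^ 2 * ‖dSD‖ ^ 2 := by
    rw [hK, hnv]
    have h5 : (0:ℝ) ≤ 2 * L / U ^ 2 := div_nonneg (by linarith) (by positivity)
    have h6 := mul_le_mul_of_nonneg_left hsq h5
    have h7 : 2 * L / U ^ 2 * (U / 2 * ‖xstar - x‖) ^ 2 = L * ‖xstar - x‖ ^ 2 / 2 := by
      field_simp
    rw [h7] at h6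
    linarith
  linarith
end

section
/- Let 0 < U ≤ L, and let f₁, …, f_m : ℝⁿ → ℝ be twice continuously differentiable with U‖z‖² ≤ zᵀ∇²f_i(x)z ≤ L‖z‖² for all x, z ∈ ℝⁿ and all i ∈ [m]. Let λ* ∈ Δ_m and x* ∈ ℝⁿ satisfy Σ_{i∈[m]} λ*_i ∇f_i(x*) = 0. Let {x_k} ⊂ ℝⁿ be a sequence, and let ω > 0 with ωU²/(2L) < 1, such that for all k ≥ 0: Σ_{i∈[m]} λ*_i f_i(x_k) − Σ_{i∈[m]} λ*_i f_i(x_{k+1}) ≥ ω ‖d_SD(x_k)‖², Σ_{i∈[m]} λ*_i f_i(x*) ≤ Σ_{i∈[m]} λ*_i f_i(x_{k+1}), and (U/2)‖x* − x_k‖ ≤ ‖d_SD(x_k)‖. Then for all k ≥ 0, ‖x_{k+1} − x*‖ ≤ √( (2/U) (Σ_{i∈[m]} λ*_i f_i(x_0) − Σ_{i∈[m]} λ*_i f_i(x*)) ) · (1 − ωU²/(2L))^{(k+1)/2}; in particular {x_k} converges R-linearly to x*. -/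
open RealInnerProductSpace

/-- 1D second-order lower Taylor bound. -/
lemma oneD_taylor_lb (g g' g'' : ℝ → ℝ) (hg : ∀ t, HasDerivAt g (g' t) t)
    (hg' : ∀ t, HasDerivAt g' (g'' t) t) (hg'0 : g' 0 = 0) (c : ℝ)
    (hc : ∀ t, c ≤ g'' t) : g 0 + c / 2 ≤ g 1 := by
  -- ψ t = g' t - c * t is monotone
  have hψ : Monotone (fun t => g' t - c * t) := by
    apply monotone_of_deriv_nonneg
    · exact fun t => ((hg' t).sub ((hasDerivAt_id t).const_mul c)).differentiableAt
    · intro t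
      have : HasDerivAt (fun t => g' t - c * t) (g'' t - c * 1) t :=
        (hg' t).sub ((hasDerivAt_id t).const_mul c)
      rw [this.deriv]
      linarith [hc t]
  have hg'ge : ∀ t, 0 ≤ t → c * t ≤ g' t := by
    intro t ht
    have := hψ ht
    simp only [mul_zero, sub_zero, hg'0] at this
    linarith
  -- φ t = g t - c * t^2 / 2 is monotone on [0,1]
  have hφd : ∀ t : ℝ, HasDerivAt (fun t => g t - c * t ^ 2 / 2) (g' t - c * t) t := by
    intro t
    have h1 : HasDerivAt (fun t : ℝ => c * t ^ 2 / 2) (c * t) t := by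
      have := ((hasDerivAt_pow 2 t).const_mul c).div_const 2
      exact this.congr_deriv (by push_cast; ring)
    exact (hg t).sub h1
  have hφ : MonotoneOn (fun t => g t - c * t ^ 2 / 2) (Set.Icc 0 1) := by
    apply monotoneOn_of_deriv_nonneg (convex_Icc 0 1)
    · exact Continuous.continuousOn (by
        have : ∀ t, DifferentiableAt ℝ (fun t => g t - c * t ^ 2 / 2) t :=
          fun t => (hφd t).differentiableAt
        exact (Differentiable.continuous this))
    · intro t _
      exact (hφd t).differentiableAt.differentiableWithinAt
    · intro t ht
      rw [interior_Icc] at ht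
      rw [(hφd t).deriv]
      have := hg'ge t ht.1.le
      linarith
  have := hφ (Set.mem_Icc.mpr ⟨le_refl 0, zero_le_one⟩)
      (Set.mem_Icc.mpr ⟨zero_le_one, le_refl 1⟩) zero_le_one
  simp only at this
  nlinarith [this]

/-- 1D second-order upper Taylor bound. -/
lemma oneD_taylor_ub (g g' g'' : ℝ → ℝ) (hg : ∀ t, HasDerivAt g (g' t) t)
    (hg' : ∀ t, HasDerivAt g' (g'' t) t) (hg'0 : g' 0 = 0) (c : ℝ)
    (hc : ∀ t, g'' t ≤ c) : g 1 ≤ g 0 + c / 2 := by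
  have := oneD_taylor_lb (fun t => -g t) (fun t => -g' t) (fun t => -g'' t)
    (fun t => (hg t).neg) (fun t => (hg' t).neg) (by simp [hg'0]) (-c)
    (fun t => by simpa using hc t)
  linarith

/-- R-linear convergence:
`‖x_{k+1} − x*‖ ≤ √((2/U)(Σ λ*_i f_i(x_0) − Σ λ*_i f_i(x*))) (1 − ωU²/(2L))^{(k+1)/2}`,
and in particular `x_k → x*`. -/
theorem stmt_18 (n m : ℕ) (hm : 0 < m) (U L : ℝ) (hU : 0 < U) (hUL : U ≤ L)
    (f : Fin m → EuclideanSpace ℝ (Fin n) → ℝ) (hf : ∀ i, ContDiff ℝ 2 (f i))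
    (hhess : ∀ i : Fin m, ∀ x z : EuclideanSpace ℝ (Fin n),
      U * ‖z‖ ^ 2 ≤ hessQF (f i) x z ∧ hessQF (f i) x z ≤ L * ‖z‖ ^ 2)
    (lam : Fin m → ℝ) (hlam0 : ∀ i, 0 ≤ lam i) (hlam1 : ∑ i, lam i = 1)
    (xstar : EuclideanSpace ℝ (Fin n))
    (hcrit : ∑ i, lam i • gradient (f i) xstar = 0)
    (dSD : EuclideanSpace ℝ (Fin n) → EuclideanSpace ℝ (Fin n))
    (hdSD : ∀ y d : EuclideanSpace ℝ (Fin n),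
      maxInner hm (fun i => gradient (f i) y) (dSD y) + ‖dSD y‖ ^ 2 / 2 ≤
        maxInner hm (fun i => gradient (f i) y) d + ‖d‖ ^ 2 / 2)
    (x : ℕ → EuclideanSpace ℝ (Fin n)) (ω : ℝ) (hω : 0 < ω)
    (hrate : ω * U ^ 2 / (2 * L) < 1)
    (hdec : ∀ k : ℕ, ω * ‖dSD (x k)‖ ^ 2 ≤
      ∑ i, lam i * f i (x k) - ∑ i, lam i * f i (x (k + 1)))
    (hstar : ∀ k : ℕ, ∑ i, lam i * f i xstar ≤ ∑ i, lam i * f i (x (k + 1)))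
    (hdist : ∀ k : ℕ, U / 2 * ‖xstar - x k‖ ≤ ‖dSD (x k)‖) :
    (∀ k : ℕ, ‖x (k + 1) - xstar‖ ≤
      Real.sqrt (2 / U * (∑ i, lam i * f i (x 0) - ∑ i, lam i * f i xstar)) *
        (1 - ω * U ^ 2 / (2 * L)) ^ (((k : ℝ) + 1) / 2)) ∧
    Filter.Tendsto x Filter.atTop (nhds xstar) := by
  have hL : 0 < L := lt_of_lt_of_le hU hUL
  set F : EuclideanSpace ℝ (Fin n) → ℝ := fun y => ∑ i, lam i * f i y with hFdef
  have hFi : ∀ i : Fin m, ContDiff ℝ 2 (fun y => lam i • f i y) :=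
    fun i => (hf i).const_smul (lam i)
  have hFc : ContDiff ℝ 2 F := by
    apply ContDiff.sum
    intro i _
    exact (hf i).const_smul (lam i)
  have hFd : Differentiable ℝ F := hFc.differentiable (by norm_num)
  have hfid : ∀ i, Differentiable ℝ (f i) := fun i => (hf i).differentiable (by norm_num)
  -- Hessian of F
  have hessF : ∀ y z : EuclideanSpace ℝ (Fin n),
      iteratedFDeriv ℝ 2 F y ![z, z] = ∑ i, lam i * iteratedFDeriv ℝ 2 (f i) y ![z, z] := by
    intro y z
    have : iteratedFDeriv ℝ 2 F = ∑ i : Fin m, iteratedFDeriv ℝ 2 (fun y => lam i • f i y) := by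
      rw [← iteratedFDeriv_sum (fun i _ => hFi i)]
      rfl
    rw [this]
    simp only [Finset.sum_apply, ContinuousMultilinearMap.sum_apply]
    congr 1
    ext i
    rw [iteratedFDeriv_const_smul_apply' (hf i).contDiffAt]
    simp
  have hessFlb : ∀ y z, U * ‖z‖ ^ 2 ≤ iteratedFDeriv ℝ 2 F y ![z, z] := by
    intro y z
    rw [hessF]
    calc U * ‖z‖ ^ 2 = ∑ i : Fin m, lam i * (U * ‖z‖ ^ 2) := by
          rw [← Finset.sum_mul, hlam1, one_mul]
      _ ≤ ∑ i, lam i * iteratedFDeriv ℝ 2 (f i) y ![z, z] := by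
          apply Finset.sum_le_sum
          intro i _
          exact mul_le_mul_of_nonneg_left ((hhess i y z).1) (hlam0 i)
  have hessFub : ∀ y z, iteratedFDeriv ℝ 2 F y ![z, z] ≤ L * ‖z‖ ^ 2 := by
    intro y z
    rw [hessF]
    calc ∑ i, lam i * iteratedFDeriv ℝ 2 (f i) y ![z, z]
        ≤ ∑ i : Fin m, lam i * (L * ‖z‖ ^ 2) := by
          apply Finset.sum_le_sum
          intro i _
          exact mul_le_mul_of_nonneg_left ((hhess i y z).2) (hlam0 i)
      _ = L * ‖z‖ ^ 2 := by rw [← Finset.sum_mul, hlam1, one_mul]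
  -- gradient of F vanishes at xstar
  have hgradF : ∀ v : EuclideanSpace ℝ (Fin n), fderiv ℝ F xstar v = 0 := by
    intro v
    have hd : ∀ i : Fin m, DifferentiableAt ℝ (fun y => lam i • f i y) xstar :=
      fun i => ((hfid i) xstar).const_smul (lam i)
    have h1 : fderiv ℝ F xstar = ∑ i, fderiv ℝ (fun y => lam i • f i y) xstar := by
      exact fderiv_fun_sum (fun i _ => hd i)
    have h2 : ∀ i : Fin m, fderiv ℝ (fun y => lam i • f i y) xstar v
        = lam i * ⟪gradient (f i) xstar, v⟫ := by
      intro i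
      rw [fderiv_fun_const_smul ((hfid i) xstar) (lam i)]
      have hg := ((hfid i) xstar).hasGradientAt
      rw [hg.hasFDerivAt.fderiv]
      simp [InnerProductSpace.toDual_apply_apply, real_inner_smul_left]
    rw [h1]
    simp only [ContinuousLinearMap.sum_apply]
    rw [Finset.sum_congr rfl (fun i _ => h2 i)]
    have : ∑ i, lam i * ⟪gradient (f i) xstar, v⟫
        = ⟪∑ i, lam i • gradient (f i) xstar, v⟫ := by
      rw [sum_inner]
      congr 1
      ext i
      rw [real_inner_smul_left]
    rw [this, hcrit, inner_zero_left]
  -- Taylor bounds for F around xstar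
  have taylor : ∀ y : EuclideanSpace ℝ (Fin n),
      U / 2 * ‖y - xstar‖ ^ 2 ≤ F y - F xstar ∧ F y - F xstar ≤ L / 2 * ‖y - xstar‖ ^ 2 := by
    intro y
    set v := y - xstar with hv
    set ℓ : ℝ → EuclideanSpace ℝ (Fin n) := fun t => xstar + t • v with hℓ
    have hline : ∀ t : ℝ, HasDerivAt ℓ v t := by
      intro t
      have : HasDerivAt (fun t : ℝ => t • v) ((1 : ℝ) • v) t := (hasDerivAt_id t).smul_const v
      have h := this.const_add xstar
      simp only [one_smul] at h
      exact h
    set g : ℝ → ℝ := fun t => F (ℓ t) with hgdef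
    set g' : ℝ → ℝ := fun t => fderiv ℝ F (ℓ t) v with hg'def
    set g'' : ℝ → ℝ := fun t => iteratedFDeriv ℝ 2 F (ℓ t) ![v, v] with hg''def
    have hg : ∀ t, HasDerivAt g (g' t) t := by
      intro t
      exact (hFd (ℓ t)).hasFDerivAt.comp_hasDerivAt t (hline t)
    have hg' : ∀ t, HasDerivAt g' (g'' t) t := by
      intro t
      have hF2 : ContDiff ℝ 1 (fderiv ℝ F) := hFc.fderiv_right (by norm_num)
      have h0 : HasFDerivAt (fderiv ℝ F) (fderiv ℝ (fderiv ℝ F) (ℓ t)) (ℓ t) :=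
        ((hF2.differentiable (by norm_num)) (ℓ t)).hasFDerivAt
      have h1 := ((ContinuousLinearMap.apply ℝ ℝ v).hasFDerivAt.comp (ℓ t) h0).comp_hasDerivAt
        t (hline t)
      have heq : g'' t = fderiv ℝ (fderiv ℝ F) (ℓ t) v v := by
        rw [hg''def]
        simp only
        rw [iteratedFDeriv_two_apply]
        simp
      rw [heq]
      exact h1
    have hg'0 : g' 0 = 0 := by
      have : ℓ 0 = xstar := by simp [hℓ]
      simp only [hg'def, this]
      exact hgradF v
    have hℓ1 : ℓ 1 = y := by simp [hℓ, hv]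
    have hℓ0 : ℓ 0 = xstar := by simp [hℓ]
    have hlow := oneD_taylor_lb g g' g'' hg hg' hg'0 (U * ‖v‖ ^ 2)
      (fun t => hessFlb (ℓ t) v)
    have hup := oneD_taylor_ub g g' g'' hg hg' hg'0 (L * ‖v‖ ^ 2)
      (fun t => hessFub (ℓ t) v)
    simp only [hgdef, hℓ0, hℓ1] at hlow hup
    constructor <;> [linarith; linarith]
  -- Main argument
  set q : ℝ := ω * U ^ 2 / (2 * L) with hq
  have hq0 : 0 < q := by positivity
  have hq1 : 1 - q ≥ 0 := by linarith
  set E : ℕ → ℝ := fun k => F (x k) - F xstar with hE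
  have htl1 : ∀ k, U / 2 * ‖x k - xstar‖ ^ 2 ≤ E k := fun k => (taylor (x k)).1
  have htl2 : ∀ k, E k ≤ L / 2 * ‖x k - xstar‖ ^ 2 := fun k => (taylor (x k)).2
  have hEdiff : ∀ k, E k - E (k + 1)
      = ∑ i, lam i * f i (x k) - ∑ i, lam i * f i (x (k + 1)) := by
    intro k
    simp only [hE, hFdef]
    ring
  have hEnn : ∀ k, 0 ≤ E (k + 1) := fun k => by
    have := hstar k
    simp only [hE, hFdef]
    linarith
  have hE0F : E 0 = ∑ i, lam i * f i (x 0) - ∑ i, lam i * f i xstar := rfl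
  have hqE : q * (2 * L) = ω * U ^ 2 := by
    rw [hq]
    field_simp
  clear_value E
  clear_value F
  clear_value q
  clear hE hFdef taylor hgradF hessFlb hessFub hessF hFd hFc hFi
  have hE0nn : 0 ≤ E 0 := by
    have h1 := hdec 0
    have h2 := hEnn 0
    have h3 : 0 ≤ ω * ‖dSD (x 0)‖ ^ 2 := by positivity
    have h4 := hEdiff 0
    linarith
  have hstep : ∀ k, E (k + 1) ≤ (1 - q) * E k := by
    intro k
    have h1 := hdec k
    have h2 := hdist k
    have h3 : (U / 2 * ‖xstar - x k‖) ^ 2 ≤ ‖dSD (x k)‖ ^ 2 :=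
      pow_le_pow_left₀ (by positivity) h2 2
    have h4 : E k ≤ L / 2 * ‖x k - xstar‖ ^ 2 := htl2 k
    have h5 : ‖xstar - x k‖ = ‖x k - xstar‖ := norm_sub_rev _ _
    have h6 : ω * (U / 2 * ‖x k - xstar‖) ^ 2 ≤ ω * ‖dSD (x k)‖ ^ 2 := by
      rw [← h5]
      exact mul_le_mul_of_nonneg_left h3 hω.le
    have h7 : q * E k ≤ ω * (U / 2 * ‖x k - xstar‖) ^ 2 := by
      have h4' : q * E k ≤ q * (L / 2 * ‖x k - xstar‖ ^ 2) :=
        mul_le_mul_of_nonneg_left h4 hq0.le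
      have heq : q * (L / 2 * ‖x k - xstar‖ ^ 2) = ω * (U / 2 * ‖x k - xstar‖) ^ 2 := by
        have : q * (L / 2 * ‖x k - xstar‖ ^ 2) = q * (2 * L) * (‖x k - xstar‖ ^ 2 / 4) := by
          ring
        rw [this, hqE]
        ring
      linarith
    have h8 := hEdiff k
    nlinarith
  have hgeom : ∀ k, E k ≤ E 0 * (1 - q) ^ k := by
    intro k
    induction k with
    | zero => simp
    | succ k ih =>
      calc E (k + 1) ≤ (1 - q) * E k := hstep k
        _ ≤ (1 - q) * (E 0 * (1 - q) ^ k) := mul_le_mul_of_nonneg_left ih hq1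
        _ = E 0 * (1 - q) ^ (k + 1) := by ring
  have hnorm : ∀ k, ‖x k - xstar‖ ≤ Real.sqrt (2 / U * E 0) * Real.sqrt ((1 - q) ^ k) := by
    intro k
    have h1 : U / 2 * ‖x k - xstar‖ ^ 2 ≤ E k := htl1 k
    have h2 : ‖x k - xstar‖ ^ 2 ≤ 2 / U * E 0 * (1 - q) ^ k := by
      have h2a := hgeom k
      have hU2 : 0 < 2 / U := by positivity
      have hcc : 2 / U * (U / 2) = 1 := by field_simp
      calc ‖x k - xstar‖ ^ 2 = 2 / U * (U / 2) * ‖x k - xstar‖ ^ 2 := by rw [hcc]; ring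
        _ = 2 / U * (U / 2 * ‖x k - xstar‖ ^ 2) := by ring
        _ ≤ 2 / U * (E 0 * (1 - q) ^ k) := by
            apply mul_le_mul_of_nonneg_left _ hU2.le
            exact le_trans h1 h2a
        _ = 2 / U * E 0 * (1 - q) ^ k := by ring
    have h3 : ‖x k - xstar‖ ≤ Real.sqrt (2 / U * E 0 * (1 - q) ^ k) :=
      Real.le_sqrt_of_sq_le h2
    rwa [Real.sqrt_mul (by positivity)] at h3
  constructor
  · intro k
    have h := hnorm (k + 1)
    rw [← hE0F]
    have hrw : Real.sqrt ((1 - q) ^ (k + 1)) = (1 - q) ^ (((k : ℝ) + 1) / 2) := by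
      rw [Real.sqrt_eq_rpow, ← Real.rpow_natCast (1 - q) (k + 1), ← Real.rpow_mul hq1]
      congr 1
      push_cast
      ring
    rw [hrw] at h
    exact h
  · rw [tendsto_iff_norm_sub_tendsto_zero]
    have hsq : ∀ k : ℕ, Real.sqrt ((1 - q) ^ k) = Real.sqrt (1 - q) ^ k := by
      intro k
      induction k with
      | zero => simp
      | succ k ih => rw [pow_succ, pow_succ, Real.sqrt_mul (pow_nonneg hq1 k), ih]
    have hr1 : Real.sqrt (1 - q) < 1 := by
      nlinarith [Real.sq_sqrt hq1, Real.sqrt_nonneg (1 - q)]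
    apply squeeze_zero (g := fun k => Real.sqrt (2 / U * E 0) * Real.sqrt (1 - q) ^ k)
      (fun k => norm_nonneg _)
      (fun k => by have := hnorm k; rwa [hsq k] at this)
    have h0 := tendsto_pow_atTop_nhds_zero_of_lt_one (Real.sqrt_nonneg _) hr1
    have := h0.const_mul (Real.sqrt (2 / U * E 0))
    simpa using this
end

section
/- Let f₁, …, f_m : ℝⁿ → ℝ be differentiable, let x ∈ ℝⁿ, and let B ∈ ℝ^{n×n} be a symmetric positive definite matrix. Let λ ∈ Δ_m be a minimizer over Δ_m of μ ↦ ⟨Σ_{i∈[m]} μ_i ∇f_i(x), B⁻¹ (Σ_{i∈[m]} μ_i ∇f_i(x))⟩, and set d = −B⁻¹ (Σ_{i∈[m]} λ_i ∇f_i(x)). Then max_{i∈[m]} ⟨∇f_i(x), d⟩ = ⟨Σ_{i∈[m]} λ_i ∇f_i(x), d⟩ = −dᵀBd, and hence max_{i∈[m]} ⟨∇f_i(x), d⟩ ≤ −dᵀBd. -/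
open RealInnerProductSpace

/-- for the dual solution `λ` and `d = −B⁻¹ Σ λ_i ∇f_i(x)`, one has
`max_i ⟪∇f_i(x), d⟫ = ⟪Σ λ_i ∇f_i(x), d⟫ = −dᵀBd`, hence
`max_i ⟪∇f_i(x), d⟫ ≤ −dᵀBd`. -/
theorem stmt_19 (n m : ℕ) (hm : 0 < m) (f : Fin m → EuclideanSpace ℝ (Fin n) → ℝ)
    (hf : ∀ i, Differentiable ℝ (f i)) (x : EuclideanSpace ℝ (Fin n))
    (B : Matrix (Fin n) (Fin n) ℝ) (hB : B.PosDef)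
    (lam : Fin m → ℝ) (hlam0 : ∀ i, 0 ≤ lam i) (hlam1 : ∑ i, lam i = 1)
    (hlammin : ∀ mu : Fin m → ℝ, (∀ i, 0 ≤ mu i) → (∑ i, mu i = 1) →
      ⟪∑ i, lam i • gradient (f i) x,
        Matrix.toEuclideanLin B⁻¹ (∑ i, lam i • gradient (f i) x)⟫ ≤
      ⟪∑ i, mu i • gradient (f i) x,
        Matrix.toEuclideanLin B⁻¹ (∑ i, mu i • gradient (f i) x)⟫)
    (d : EuclideanSpace ℝ (Fin n))
    (hd : d = -Matrix.toEuclideanLin B⁻¹ (∑ i, lam i • gradient (f i) x)) :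
    maxInner hm (fun i => gradient (f i) x) d = ⟪∑ i, lam i • gradient (f i) x, d⟫ ∧
    ⟪∑ i, lam i • gradient (f i) x, d⟫ = -quadForm B d ∧
    maxInner hm (fun i => gradient (f i) x) d ≤ -quadForm B d := by
  set g : Fin m → EuclideanSpace ℝ (Fin n) := fun i => gradient (f i) x with hg
  set v : EuclideanSpace ℝ (Fin n) := ∑ i, lam i • g i with hv
  set A : EuclideanSpace ℝ (Fin n) →ₗ[ℝ] EuclideanSpace ℝ (Fin n) :=
    Matrix.toEuclideanLin B⁻¹ with hA
  have hBinvH : (B⁻¹).IsHermitian := hB.isHermitian.inv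
  have hsymm : ∀ u w : EuclideanSpace ℝ (Fin n), ⟪A u, w⟫ = ⟪u, A w⟫ :=
    Matrix.isHermitian_iff_isSymmetric.mp hBinvH
  -- first-order optimality at each vertex direction
  have key : ∀ i : Fin m, 0 ≤ ⟪v, A (g i - v)⟫ := by
    intro i
    set w := g i - v with hw
    set c := ⟪v, A w⟫ with hc
    set k := ⟪w, A w⟫ with hk
    clear_value c k
    have hexp : ∀ t : ℝ, 0 ≤ t → t ≤ 1 → 0 ≤ 2 * t * c + t ^ 2 * k := by
      intro t ht0 ht1
      have hmu0 : ∀ j, 0 ≤ (1 - t) * lam j + t * (if j = i then 1 else 0) := by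
        intro j
        have := hlam0 j
        split <;> nlinarith
      have hmu1 : ∑ j, ((1 - t) * lam j + t * (if j = i then 1 else 0)) = 1 := by
        rw [Finset.sum_add_distrib, ← Finset.mul_sum, hlam1, ← Finset.mul_sum]
        simp
      have hsum : ∑ j, ((1 - t) * lam j + t * (if j = i then 1 else 0)) • g j
          = v + t • w := by
        simp only [add_smul, Finset.sum_add_distrib, mul_smul, ← Finset.smul_sum, ← hv]
        have : (∑ j, (if j = i then (1:ℝ) else 0) • g j) = g i := by
          simp [ite_smul]
        rw [this, hw]
        module
      have hmin : ⟪v, A v⟫ ≤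
          ⟪∑ j, ((1 - t) * lam j + t * (if j = i then 1 else 0)) • g j,
            A (∑ j, ((1 - t) * lam j + t * (if j = i then 1 else 0)) • g j)⟫ :=
        hlammin (fun j => (1 - t) * lam j + t * (if j = i then 1 else 0)) hmu0 hmu1
      rw [hsum] at hmin
      have hexpand : ⟪v + t • w, A (v + t • w)⟫
          = ⟪v, A v⟫ + 2 * t * c + t ^ 2 * k := by
        rw [map_add, map_smul, inner_add_left, inner_add_right, inner_add_right,
          real_inner_smul_left, real_inner_smul_left, real_inner_smul_right,
          real_inner_smul_right]
        have : ⟪w, A v⟫ = ⟪v, A w⟫ := by rw [← hsymm w v, real_inner_comm]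
        rw [this, ← hc, ← hk]
        ring
      rw [hexpand] at hmin
      linarith
    by_contra hcneg
    push_neg at hcneg
    rcases le_or_gt k 0 with hk0 | hk0
    · have := hexp 1 zero_le_one le_rfl
      nlinarith
    · have ht0 : 0 < min 1 (-c / k) := by
        apply lt_min one_pos
        exact div_pos (by linarith) hk0
      have ht1 : min 1 (-c / k) ≤ 1 := min_le_left _ _
      have := hexp (min 1 (-c / k)) ht0.le ht1
      have htk : min 1 (-c / k) * k ≤ -c := by
        have h2 : min 1 (-c / k) ≤ -c / k := min_le_right _ _
        calc min 1 (-c / k) * k ≤ (-c / k) * k :=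
              mul_le_mul_of_nonneg_right h2 hk0.le
        _ = -c := by field_simp
      set tt := min 1 (-c / k) with htt
      have h3 : 2 * tt * c + tt ^ 2 * k = tt * (2 * c + tt * k) := by ring
      have h4 : 2 * c + tt * k ≤ c := by linarith
      have h5 : tt * (2 * c + tt * k) ≤ tt * c :=
        mul_le_mul_of_nonneg_left h4 ht0.le
      have h6 : tt * c < 0 := mul_neg_of_pos_of_neg ht0 hcneg
      linarith
  -- hence each ⟪g i, d⟫ ≤ ⟪v, d⟫
  have hdAv : d = -A v := by rw [hd]
  have hle : ∀ i : Fin m, ⟪g i, d⟫ ≤ ⟪v, d⟫ := by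
    intro i
    have hki := key i
    rw [map_sub, inner_sub_right] at hki
    have h1 : ⟪v, A (g i)⟫ = ⟪g i, A v⟫ := by rw [← hsymm v (g i), real_inner_comm]
    rw [hdAv, inner_neg_right, inner_neg_right]
    rw [h1] at hki
    linarith
  have hmaxle : maxInner hm g d ≤ ⟪v, d⟫ :=
    Finset.sup'_le _ _ fun i _ => hle i
  have hvd : ⟪v, d⟫ = ∑ i, lam i * ⟪g i, d⟫ := by
    rw [hv, sum_inner]
    exact Finset.sum_congr rfl fun i _ => real_inner_smul_left _ _ _
  have hlemax : ⟪v, d⟫ ≤ maxInner hm g d := by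
    rw [hvd]
    calc ∑ i, lam i * ⟪g i, d⟫
        ≤ ∑ i, lam i * maxInner hm g d := by
          apply Finset.sum_le_sum
          intro i _
          exact mul_le_mul_of_nonneg_left
            (Finset.le_sup' (fun j => ⟪g j, d⟫) (Finset.mem_univ i)) (hlam0 i)
      _ = maxInner hm g d := by rw [← Finset.sum_mul, hlam1, one_mul]
  have heq1 : maxInner hm g d = ⟪v, d⟫ := le_antisymm hmaxle hlemax
  -- quadratic form identity
  have hBA : Matrix.toEuclideanLin B (A v) = v := by
    rw [hA, Matrix.toEuclideanLin_apply, Matrix.toEuclideanLin_apply,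
      WithLp.ofLp_toLp, Matrix.mulVec_mulVec,
      Matrix.mul_nonsing_inv B (isUnit_iff_ne_zero.mpr hB.det_pos.ne'),
      Matrix.one_mulVec, WithLp.toLp_ofLp]
  have heq2 : ⟪v, d⟫ = -quadForm B d := by
    rw [quadForm, hdAv]
    simp only [inner_neg_left, inner_neg_right, map_neg, hBA, neg_neg]
    rw [real_inner_comm (A v) v]
  refine ⟨heq1, heq2, ?_⟩
  rw [heq1, heq2]
end
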